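/- arXiv:2511.12781 — 2 statements merged into one kernel-verified Lean document; each statement's English description precedes it below -/
import Mathlib

section
/- For every 2-degenerate graph G on n vertices, the minimum size of a strongly separating path system of G is at most n. -/
open scoped Classical

/-- A (vertex sequence forming a) path in a graph `G`: a nonempty list of
pairwise distinct vertices in which consecutive vertices are adjacent. -/
def IsPathList {V : Type*} (G : SimpleGraph V) (l : List V) : Prop :=
  l ≠ [] ∧ l.Chain' G.Adj ∧ l.Nodup

/-- The edge `e` occurs on the path given by the list `l`. -/
def edgeMemList {V : Type*} (e : Sym2 V) (l : List V) : Prop :=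
  ∃ p ∈ l.zip l.tail, Sym2.mk p.1 p.2 = e

/-- `P` is a strongly separating path system of `G`. -/
def StronglySeparating {V : Type*} (G : SimpleGraph V) (P : Finset (List V)) : Prop :=
  (∀ l ∈ P, IsPathList G l) ∧
  ∀ e ∈ G.edgeSet, ∀ f ∈ G.edgeSet, e ≠ f →
    (∃ l ∈ P, edgeMemList e l ∧ ¬ edgeMemList f l) ∧
    (∃ l ∈ P, edgeMemList f l ∧ ¬ edgeMemList e l)

/-- The strong separation number: the minimum size of a strongly
separating path system. -/
noncomputable def ssp {V : Type*} (G : SimpleGraph V) : ℕ :=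
  sInf {k | ∃ P : Finset (List V), StronglySeparating G P ∧ P.card = k}

/-- A graph is 2-degenerate if every (induced) subgraph has a vertex of degree at most 2. -/
def TwoDegenerate {V : Type*} (G : SimpleGraph V) : Prop :=
  ∀ S : Set V, S.Nonempty → ∃ v ∈ S, {u | u ∈ S ∧ G.Adj v u}.ncard ≤ 2

/-- `v` is an endpoint of the path given by the list `l`. -/
def IsEndpointOf {V : Type*} (v : V) (l : List V) : Prop :=
  l.head? = some v ∨ l.getLast? = some v

/-!
Induction on `S ⊆ V`, removing a vertex of degree at most two in `G[S]`. The invariant is a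
family of paths indexed by `S` (so with at most `|S|` distinct members) such that every edge of
`G[S]` lies on exactly two paths, different edges on different pairs of paths, and every vertex of
`S` is an endpoint of exactly two paths, a one-vertex path counting twice. Distinct two-element
sets are incomparable, so such a family is strongly separating.

To add a vertex `v` with neighbours `N ⊆ S`, `|N| ≤ 2`: for each `u ∈ N`, prolong a path ending
at `u` (different paths for different `u`, which the endpoint count allows) by the edge `uv`,
and give `v` the new path `v`, `u v` or `u v w` whose edges are exactly those from `v` to `N`.
Each new edge then lies on the new path and on one prolonged path, and the endpoint counts are
restored: every prolonged path trades its endpoint `u` for `v`, and the new path ends at the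
vertices of `N` and at `2 - |N|` further copies of `v`.
-/

section

variable {V : Type*} {G : SimpleGraph V}

theorem mem_zip_tail_iff_infix {l : List V} {a b : V} :
    (a, b) ∈ l.zip l.tail ↔ [a, b] <:+: l := by
  induction l with
  | nil => simp
  | cons x l ih =>
    cases l with
    | nil => exact ⟨by simp, fun h => absurd h.length_le (by simp)⟩
    | cons y t =>
      rw [List.infix_cons_iff, ← ih]
      simp

theorem edgeMemList_iff_infix {e : Sym2 V} {l : List V} :
    edgeMemList e l ↔ ∃ a b, [a, b] <:+: l ∧ s(a, b) = e := by
  simp [edgeMemList, mem_zip_tail_iff_infix]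

@[simp]
theorem edgeMemList_reverse {e : Sym2 V} {l : List V} :
    edgeMemList e l.reverse ↔ edgeMemList e l := by
  simp only [edgeMemList_iff_infix]
  constructor
  · rintro ⟨a, b, h, rfl⟩
    exact ⟨b, a, by simpa using List.reverse_infix.2 h, Sym2.eq_swap⟩
  · rintro ⟨a, b, h, rfl⟩
    exact ⟨b, a, by simpa using List.reverse_infix.2 h, Sym2.eq_swap⟩

theorem edgeMemList_cons_cons {e : Sym2 V} {a b : V} {l : List V} :
    edgeMemList e (a :: b :: l) ↔ e = s(a, b) ∨ edgeMemList e (b :: l) := by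
  simp [edgeMemList, eq_comm]

theorem mem_of_edgeMemList {e : Sym2 V} {l : List V} {x : V} (h : edgeMemList e l)
    (hx : x ∈ e) : x ∈ l := by
  obtain ⟨⟨a, b⟩, hp, rfl⟩ := h
  obtain ⟨ha, hb⟩ := List.of_mem_zip hp
  rcases Sym2.mem_iff.1 hx with rfl | rfl
  · exact ha
  · exact List.mem_of_mem_tail hb

theorem IsPathList.reverse {l : List V} (h : IsPathList G l) : IsPathList G l.reverse :=
  ⟨by simpa using h.1, List.isChain_reverse.2 (h.2.1.imp fun _ _ h => h.symm),
    List.nodup_reverse.2 h.2.2⟩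

theorem IsPathList.cons {u v : V} {l : List V} (h : IsPathList G (u :: l)) (hadj : G.Adj v u)
    (hv : v ∉ u :: l) : IsPathList G (v :: u :: l) :=
  ⟨List.cons_ne_nil _ _, List.isChain_cons_cons.2 ⟨hadj, h.2.1⟩, List.nodup_cons.2 ⟨hv, h.2.2⟩⟩

def endpoints (l : List V) : Multiset V := (l.head?.toList : Multiset V) + l.getLast?.toList

@[simp]
theorem endpoints_reverse (l : List V) : endpoints l.reverse = endpoints l := by
  simp [endpoints, add_comm]

theorem endpoints_singleton (v : V) : endpoints [v] = {v, v} := rfl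

theorem endpoints_cons_cons_add (u v : V) (l : List V) :
    endpoints (v :: u :: l) + {u} = endpoints (u :: l) + {v} := by
  simp only [endpoints, List.head?_cons, List.getLast?_cons_cons, Option.toList_some,
    Multiset.coe_singleton]
  abel

theorem card_endpoints_le_two (l : List V) : Multiset.card (endpoints l) ≤ 2 := by
  unfold endpoints
  generalize l.head? = a
  generalize l.getLast? = b
  cases a <;> cases b <;> simp

theorem count_endpoints_le_one {l : List V} {u w : V} (hu : u ∈ endpoints l) (hw : w ≠ u) :
    (endpoints l).count w ≤ 1 := by
  obtain ⟨r, hr⟩ := Multiset.exists_cons_of_mem hu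
  have hcard := card_endpoints_le_two l
  rw [hr, Multiset.card_cons] at hcard
  rw [hr, Multiset.count_cons_of_ne hw]
  exact (Multiset.count_le_card w r).trans (by omega)

noncomputable def orient (l : List V) (u : V) : List V :=
  if l.head? = some u then l else l.reverse

theorem orient_eq_or (l : List V) (u : V) : orient l u = l ∨ orient l u = l.reverse := by
  unfold orient
  split_ifs <;> simp

@[simp]
theorem mem_orient {l : List V} {u x : V} : x ∈ orient l u ↔ x ∈ l := by
  rcases orient_eq_or l u with h | h <;> simp [h]

theorem exists_orient_eq_cons {l : List V} {u : V} (hu : u ∈ endpoints l) :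
    ∃ t, orient l u = u :: t := by
  unfold orient
  split_ifs with h
  · exact List.head?_eq_some_iff.1 h
  · simp only [endpoints, Multiset.mem_add, Multiset.mem_coe, Option.mem_toList, h,
      false_or] at hu
    exact List.head?_eq_some_iff.1 (by rwa [List.head?_reverse])

noncomputable def prolong (l : List V) (u v : V) : List V := v :: orient l u

theorem mem_prolong {l : List V} {u v x : V} : x ∈ prolong l u v ↔ x = v ∨ x ∈ l := by
  simp [prolong]

theorem IsPathList.prolong {l : List V} {u v : V} (h : IsPathList G l) (hu : u ∈ endpoints l)
    (hadj : G.Adj u v) (hv : v ∉ l) : IsPathList G (prolong l u v) := by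
  obtain ⟨t, ht⟩ := exists_orient_eq_cons hu
  have horient : IsPathList G (u :: t) := by
    rw [← ht]
    rcases orient_eq_or l u with h' | h' <;> rw [h']
    exacts [h, h.reverse]
  rw [_root_.prolong, ht]
  exact horient.cons hadj.symm fun hvt => hv (mem_orient.1 (ht ▸ hvt))

theorem edgeMemList_prolong {l : List V} {u v : V} {e : Sym2 V} (hu : u ∈ endpoints l) :
    edgeMemList e (prolong l u v) ↔ e = s(v, u) ∨ edgeMemList e l := by
  obtain ⟨t, ht⟩ := exists_orient_eq_cons hu
  rw [prolong, ht, edgeMemList_cons_cons, ← ht]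
  rcases orient_eq_or l u with h | h <;> simp [h]

theorem endpoints_prolong {l : List V} {u v : V} (hu : u ∈ endpoints l) :
    endpoints (prolong l u v) + {u} = endpoints l + {v} := by
  obtain ⟨t, ht⟩ := exists_orient_eq_cons hu
  rw [prolong, ht, endpoints_cons_cons_add, ← ht]
  rcases orient_eq_or l u with h | h <;> simp [h]

noncomputable def pathsThrough (S : Finset V) (p : V → List V) (e : Sym2 V) : Finset V :=
  S.filter fun i => edgeMemList e (p i)

structure IsDoubleCover (G : SimpleGraph V) (S : Finset V) (p : V → List V) : Prop where
  isPathList : ∀ i ∈ S, IsPathList G (p i)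
  mem : ∀ i ∈ S, ∀ x ∈ p i, x ∈ S
  card_pathsThrough : ∀ e ∈ G.edgeSet, e ∈ S.sym2 → (pathsThrough S p e).card = 2
  injOn_pathsThrough : Set.InjOn (pathsThrough S p) (G.edgeSet ∩ S.sym2)
  sum_endpoints : ∑ i ∈ S, endpoints (p i) = 2 • S.val

theorem isDoubleCover_empty (p : V → List V) : IsDoubleCover G ∅ p where
  isPathList := by simp
  mem := by simp
  card_pathsThrough := by simp
  injOn_pathsThrough := by simp
  sum_endpoints := by simp

theorem IsDoubleCover.exists_separating {S : Finset V} {p : V → List V}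
    (hc : IsDoubleCover G S p) {e f : Sym2 V} (he : e ∈ G.edgeSet ∩ S.sym2)
    (hf : f ∈ G.edgeSet ∩ S.sym2) (hef : e ≠ f) :
    ∃ i ∈ S, edgeMemList e (p i) ∧ ¬ edgeMemList f (p i) := by
  have hsub : ¬ pathsThrough S p e ⊆ pathsThrough S p f := fun hsub =>
    hef (hc.injOn_pathsThrough he hf (Finset.eq_of_subset_of_card_le hsub
      (by rw [hc.card_pathsThrough e he.1 he.2, hc.card_pathsThrough f hf.1 hf.2])))
  obtain ⟨i, hie, hif⟩ := Finset.not_subset.1 hsub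
  simp only [pathsThrough, Finset.mem_filter, not_and] at hie hif
  exact ⟨i, hie.1, hie.2, hif hie.1⟩

theorem IsDoubleCover.stronglySeparating [Fintype V] {p : V → List V}
    (hc : IsDoubleCover G Finset.univ p) : StronglySeparating G (Finset.univ.image p) := by
  have hall : ∀ e ∈ G.edgeSet, e ∈ G.edgeSet ∩ (Finset.univ : Finset V).sym2 :=
    fun e he => ⟨he, Finset.mem_sym2_iff.2 fun x _ => Finset.mem_univ x⟩
  refine ⟨by simpa using fun i => hc.isPathList i (Finset.mem_univ i), fun e he f hf hef => ?_⟩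
  obtain ⟨i, -, hi⟩ := hc.exists_separating (hall e he) (hall f hf) hef
  obtain ⟨j, -, hj⟩ := hc.exists_separating (hall f hf) (hall e he) hef.symm
  exact ⟨⟨p i, Finset.mem_image_of_mem p (Finset.mem_univ i), hi⟩,
    ⟨p j, Finset.mem_image_of_mem p (Finset.mem_univ j), hj⟩⟩

theorem SimpleGraph.mem_edgeSet_sym2_insert {S : Finset V} {v : V} {e : Sym2 V}
    (he : e ∈ G.edgeSet) (heS : e ∈ (insert v S).sym2) :
    (v ∉ e ∧ e ∈ S.sym2) ∨ ∃ u ∈ S.filter (G.Adj v), e = s(v, u) := by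
  rw [Finset.mem_sym2_iff] at heS
  by_cases hve : v ∈ e
  · obtain ⟨u, rfl⟩ := Sym2.mem_iff_exists.1 hve
    have hadj : G.Adj v u := he
    have hu := Finset.mem_insert.1 (heS u (Sym2.mem_mk_right v u))
    exact Or.inr ⟨u, Finset.mem_filter.2 ⟨hu.resolve_left hadj.ne', hadj⟩, rfl⟩
  · refine Or.inl ⟨hve, Finset.mem_sym2_iff.2 fun x hx => ?_⟩
    exact (Finset.mem_insert.1 (heS x hx)).resolve_left (by rintro rfl; exact hve hx)

theorem Finset.card_filter_eq_one_of_map_val_eq {α β : Type*} [DecidableEq β] {T : Finset α}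
    {N : Finset β} {b : α → β} (hTN : T.val.map b = N.val) {u : β} (hu : u ∈ N) :
    (T.filter (b · = u)).card = 1 := by
  have := congrArg (Multiset.count u) hTN
  rw [Multiset.count_eq_one_of_mem N.nodup hu, Multiset.count_map] at this
  rw [← this, Finset.card_def, Finset.filter_val]
  simp only [eq_comm]

noncomputable def insertVertex (p : V → List V) (v : V) (C : List V) (T : Finset V)
    (b : V → V) : V → List V :=
  fun i => if i = v then C else if i ∈ T then prolong (p i) (b i) v else p i

section insertVertex

variable {S T : Finset V} {p : V → List V} {v : V} {C : List V} {b : V → V}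

@[simp]
theorem insertVertex_self : insertVertex p v C T b v = C := if_pos rfl

theorem insertVertex_of_mem {i : V} (hiv : i ≠ v) (hiT : i ∈ T) :
    insertVertex p v C T b i = prolong (p i) (b i) v := by
  simp [insertVertex, hiv, hiT]

theorem insertVertex_of_notMem {i : V} (hiv : i ≠ v) (hiT : i ∉ T) :
    insertVertex p v C T b i = p i := by
  simp [insertVertex, hiv, hiT]

theorem pathsThrough_insertVertex_of_notMem (hv : v ∉ S)
    (hb : ∀ i ∈ T, b i ∈ endpoints (p i))
    (hCedge : ∀ e, edgeMemList e C ↔ ∃ u ∈ S.filter (G.Adj v), e = s(v, u)) {e : Sym2 V}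
    (he : v ∉ e) : pathsThrough (insert v S) (insertVertex p v C T b) e = pathsThrough S p e := by
  ext i
  simp only [pathsThrough, Finset.mem_filter, Finset.mem_insert]
  by_cases hiv : i = v
  · subst hiv
    suffices ¬ edgeMemList e C by simpa [hv]
    intro hC
    obtain ⟨u, -, rfl⟩ := (hCedge e).1 hC
    exact he (Sym2.mem_mk_left i u)
  by_cases hiT : i ∈ T
  · rw [insertVertex_of_mem hiv hiT, edgeMemList_prolong (hb i hiT)]
    have hne : e ≠ s(v, b i) := fun h => he (h ▸ Sym2.mem_mk_left v _)
    simp [hiv, hne]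
  · rw [insertVertex_of_notMem hiv hiT]
    simp [hiv]

theorem IsDoubleCover.pathsThrough_insertVertex_adj (hc : IsDoubleCover G S p) (hv : v ∉ S)
    (hT : T ⊆ S) (hb : ∀ i ∈ T, b i ∈ endpoints (p i))
    (hCedge : ∀ e, edgeMemList e C ↔ ∃ u ∈ S.filter (G.Adj v), e = s(v, u)) {u : V}
    (hu : u ∈ S.filter (G.Adj v)) :
    pathsThrough (insert v S) (insertVertex p v C T b) s(v, u)
      = insert v (T.filter (b · = u)) := by
  ext i
  simp only [pathsThrough, Finset.mem_filter, Finset.mem_insert]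
  by_cases hiv : i = v
  · subst hiv
    simpa using (hCedge _).2 ⟨u, hu, rfl⟩
  have hpi : i ∈ S → ¬ edgeMemList s(v, u) (p i) := fun hiS h =>
    hv (hc.mem i hiS v (mem_of_edgeMemList h (Sym2.mem_mk_left v u)))
  by_cases hiT : i ∈ T
  · rw [insertVertex_of_mem hiv hiT, edgeMemList_prolong (hb i hiT), Sym2.congr_right]
    simp [hiv, hiT, hT hiT, hpi (hT hiT), eq_comm]
  · rw [insertVertex_of_notMem hiv hiT]
    simpa [hiv, hiT] using hpi

theorem sum_endpoints_insertVertex (hv : v ∉ S) (hT : T ⊆ S)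
    (hb : ∀ i ∈ T, b i ∈ endpoints (p i)) (hS : ∑ i ∈ S, endpoints (p i) = 2 • S.val)
    (hC : endpoints C + T.card • {v} = {v, v} + T.val.map b) :
    ∑ i ∈ insert v S, endpoints (insertVertex p v C T b i) = 2 • (insert v S).val := by
  have hsplit : ∑ i ∈ S, endpoints (insertVertex p v C T b i)
      = ∑ i ∈ S \ T, endpoints (p i) + ∑ i ∈ T, endpoints (prolong (p i) (b i) v) := by
    rw [← Finset.sum_sdiff hT]
    congr 1
    · refine Finset.sum_congr rfl fun i hi => ?_
      have hi := Finset.mem_sdiff.1 hi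
      rw [insertVertex_of_notMem (ne_of_mem_of_not_mem hi.1 hv) hi.2]
    · exact Finset.sum_congr rfl fun i hi => by
        rw [insertVertex_of_mem (ne_of_mem_of_not_mem (hT hi) hv) hi]
  have hprolong : ∑ i ∈ T, endpoints (prolong (p i) (b i) v) + T.val.map b
      = ∑ i ∈ T, endpoints (p i) + T.card • {v} := by
    have hsingle : ∑ i ∈ T, ({b i} : Multiset V) = T.val.map b := by
      simpa [Multiset.map_map] using Multiset.sum_map_singleton (T.val.map b)
    rw [← hsingle, ← Finset.sum_add_distrib,
      Finset.sum_congr rfl fun i hi => endpoints_prolong (hb i hi), Finset.sum_add_distrib,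
      Finset.sum_const]
  rw [← Finset.sum_sdiff hT] at hS
  rw [Finset.sum_insert hv, insertVertex_self, hsplit, Finset.insert_val_of_notMem hv]
  ext w
  have h1 := congrArg (Multiset.count w) hS
  have h2 := congrArg (Multiset.count w) hprolong
  have h3 := congrArg (Multiset.count w) hC
  simp only [Multiset.count_add, Multiset.count_nsmul, Multiset.insert_eq_cons,
    Multiset.count_cons, Multiset.count_singleton] at h1 h2 h3 ⊢
  omega

theorem IsDoubleCover.card_pathsThrough_insertVertex (hc : IsDoubleCover G S p) (hv : v ∉ S)
    (hT : T ⊆ S) (hb : ∀ i ∈ T, b i ∈ endpoints (p i))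
    (hTN : T.val.map b = (S.filter (G.Adj v)).val)
    (hCedge : ∀ e, edgeMemList e C ↔ ∃ u ∈ S.filter (G.Adj v), e = s(v, u)) {e : Sym2 V}
    (he : e ∈ G.edgeSet) (heS : e ∈ (insert v S).sym2) :
    (pathsThrough (insert v S) (insertVertex p v C T b) e).card = 2 := by
  rcases SimpleGraph.mem_edgeSet_sym2_insert he heS with ⟨hve, heS⟩ | ⟨u, hu, rfl⟩
  · rw [pathsThrough_insertVertex_of_notMem hv hb hCedge hve]
    exact hc.card_pathsThrough e he heS
  · rw [hc.pathsThrough_insertVertex_adj hv hT hb hCedge hu, Finset.card_insert_of_notMem,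
      Finset.card_filter_eq_one_of_map_val_eq hTN hu]
    exact fun h => hv (hT (Finset.mem_filter.1 h).1)

theorem IsDoubleCover.injOn_pathsThrough_insertVertex (hc : IsDoubleCover G S p) (hv : v ∉ S)
    (hT : T ⊆ S) (hb : ∀ i ∈ T, b i ∈ endpoints (p i))
    (hTN : T.val.map b = (S.filter (G.Adj v)).val)
    (hCedge : ∀ e, edgeMemList e C ↔ ∃ u ∈ S.filter (G.Adj v), e = s(v, u)) :
    Set.InjOn (pathsThrough (insert v S) (insertVertex p v C T b))
      (G.edgeSet ∩ (insert v S).sym2) := by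
  have hold {e : Sym2 V} (he : v ∉ e) :=
    pathsThrough_insertVertex_of_notMem (T := T) hv hb hCedge he
  have hnew {u : V} (hu : u ∈ S.filter (G.Adj v)) :=
    hc.pathsThrough_insertVertex_adj hv hT hb hCedge hu
  have hvpaths : ∀ e, v ∉ pathsThrough S p e := fun e h => hv (Finset.mem_filter.1 h).1
  rintro e ⟨he, heS⟩ f ⟨hf, hfS⟩ h
  rcases SimpleGraph.mem_edgeSet_sym2_insert he heS with ⟨hve, heS⟩ | ⟨u, hu, rfl⟩ <;>
    rcases SimpleGraph.mem_edgeSet_sym2_insert hf hfS with ⟨hvf, hfS⟩ | ⟨w, hw, rfl⟩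
  · rw [hold hve, hold hvf] at h
    exact hc.injOn_pathsThrough ⟨he, heS⟩ ⟨hf, hfS⟩ h
  · rw [hold hve, hnew hw] at h
    exact absurd (h ▸ Finset.mem_insert_self v _) (hvpaths e)
  · rw [hnew hu, hold hvf] at h
    exact absurd (h ▸ Finset.mem_insert_self v _) (hvpaths f)
  · rw [hnew hu, hnew hw] at h
    obtain ⟨i, hiu⟩ : (T.filter (b · = u)).Nonempty := Finset.card_pos.1 (by
      rw [Finset.card_filter_eq_one_of_map_val_eq hTN hu]
      exact one_pos)
    have hiw : i ∈ insert v (T.filter (b · = w)) := h ▸ Finset.mem_insert_of_mem hiu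
    rw [Finset.mem_filter] at hiu
    rcases Finset.mem_insert.1 hiw with rfl | hiw
    · exact absurd (hT hiu.1) hv
    · rw [← hiu.2, (Finset.mem_filter.1 hiw).2]

theorem IsDoubleCover.insertVertex (hc : IsDoubleCover G S p) (hv : v ∉ S) (hT : T ⊆ S)
    (hb : ∀ i ∈ T, b i ∈ endpoints (p i)) (hTN : T.val.map b = (S.filter (G.Adj v)).val)
    (hC : IsPathList G C) (hCmem : ∀ x ∈ C, x = v ∨ x ∈ S.filter (G.Adj v))
    (hCedge : ∀ e, edgeMemList e C ↔ ∃ u ∈ S.filter (G.Adj v), e = s(v, u))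
    (hCends : endpoints C + (S.filter (G.Adj v)).card • {v}
      = {v, v} + (S.filter (G.Adj v)).val) :
    IsDoubleCover G (insert v S) (_root_.insertVertex p v C T b) := by
  have hTcard : T.card = (S.filter (G.Adj v)).card := by
    rw [Finset.card_def, ← Multiset.card_map b, hTN, ← Finset.card_def]
  have hbN : ∀ i ∈ T, G.Adj v (b i) := fun i hi =>
    (Finset.mem_filter.1 (hTN ▸ Multiset.mem_map_of_mem b hi :
      b i ∈ (S.filter (G.Adj v)).val)).2
  refine ⟨fun i hi => ?_, fun i hi x hx => ?_,
    fun e => hc.card_pathsThrough_insertVertex hv hT hb hTN hCedge,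
    hc.injOn_pathsThrough_insertVertex hv hT hb hTN hCedge,
    sum_endpoints_insertVertex hv hT hb hc.sum_endpoints (by rwa [hTcard, hTN])⟩
  · rcases Finset.mem_insert.1 hi with rfl | hiS
    · simpa using hC
    by_cases hiT : i ∈ T
    · rw [insertVertex_of_mem (ne_of_mem_of_not_mem hiS hv) hiT]
      exact (hc.isPathList i hiS).prolong (hb i hiT) (hbN i hiT).symm
        fun h => hv (hc.mem i hiS v h)
    · rw [insertVertex_of_notMem (ne_of_mem_of_not_mem hiS hv) hiT]
      exact hc.isPathList i hiS
  · rcases Finset.mem_insert.1 hi with rfl | hiS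
    · rw [insertVertex_self] at hx
      exact Finset.mem_insert.2 ((hCmem x hx).imp_right (Finset.mem_of_mem_filter x))
    by_cases hiT : i ∈ T
    · rw [insertVertex_of_mem (ne_of_mem_of_not_mem hiS hv) hiT, mem_prolong] at hx
      exact Finset.mem_insert.2 (hx.imp_right (hc.mem i hiS x))
    · rw [insertVertex_of_notMem (ne_of_mem_of_not_mem hiS hv) hiT] at hx
      exact Finset.mem_insert_of_mem (hc.mem i hiS x hx)

end insertVertex

theorem exists_path_star {v : V} {N : Finset V} (hN : ∀ u ∈ N, G.Adj v u) (hcard : N.card ≤ 2) :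
    ∃ C : List V, IsPathList G C ∧ (∀ x ∈ C, x = v ∨ x ∈ N) ∧
      (∀ e, edgeMemList e C ↔ ∃ u ∈ N, e = s(v, u)) ∧
      endpoints C + N.card • {v} = {v, v} + N.val := by
  obtain h | h | h : N.card = 0 ∨ N.card = 1 ∨ N.card = 2 := by omega
  · obtain rfl := Finset.card_eq_zero.1 h
    refine ⟨[v], ⟨List.cons_ne_nil _ _, List.isChain_singleton v, List.nodup_singleton v⟩,
      ?_, ?_, ?_⟩
    · simp
    · simp [edgeMemList]
    · simp [endpoints_singleton]
  · obtain ⟨u, rfl⟩ := Finset.card_eq_one.1 h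
    have hvu := hN u (Finset.mem_singleton_self u)
    refine ⟨[u, v], ⟨List.cons_ne_nil _ _, List.isChain_pair.2 hvu.symm,
      by simpa using hvu.ne'⟩, ?_, ?_, ?_⟩
    · simp
    · simp [edgeMemList, eq_comm, Sym2.eq_swap (a := u)]
    · simp [endpoints, ← Multiset.singleton_add]
      abel
  · obtain ⟨u, w, huw, rfl⟩ := Finset.card_eq_two.1 h
    have hvu := hN u (Finset.mem_insert_self u _)
    have hvw := hN w (Finset.mem_insert_of_mem (Finset.mem_singleton_self w))
    refine ⟨[u, v, w], ⟨List.cons_ne_nil _ _,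
      List.isChain_cons_cons.2 ⟨hvu.symm, List.isChain_pair.2 hvw⟩,
      by simpa [huw] using ⟨hvu.ne', hvw.ne⟩⟩, ?_, ?_, ?_⟩
    · simp
    · simp [edgeMemList, eq_comm, Sym2.eq_swap (a := u)]
    · rw [h]
      simp [endpoints, huw, ← Multiset.singleton_add, two_nsmul]
      abel

theorem IsDoubleCover.exists_mem_endpoints {S : Finset V} {p : V → List V}
    (hc : IsDoubleCover G S p) {u : V} (hu : u ∈ S) : ∃ i ∈ S, u ∈ endpoints (p i) :=
  Multiset.mem_sum.1 (by rw [hc.sum_endpoints]; simpa using hu)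

theorem IsDoubleCover.exists_ne_mem_endpoints {S : Finset V} {p : V → List V}
    (hc : IsDoubleCover G S p) {u j : V} (hu : u ∈ S) (hj : j ∈ S)
    (hju : (endpoints (p j)).count u ≤ 1) : ∃ i ∈ S, i ≠ j ∧ u ∈ endpoints (p i) := by
  have h := congrArg (Multiset.count u) hc.sum_endpoints
  rw [← Finset.add_sum_erase S _ hj, Multiset.count_add, Multiset.count_nsmul,
    Multiset.count_eq_one_of_mem S.nodup hu] at h
  obtain ⟨i, hi, hui⟩ := Multiset.mem_sum.1 (Multiset.count_pos.1 (by omega :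
    0 < (∑ i ∈ S.erase j, endpoints (p i)).count u))
  exact ⟨i, Finset.mem_of_mem_erase hi, Finset.ne_of_mem_erase hi, hui⟩

theorem IsDoubleCover.exists_paths_ending_at {S N : Finset V} {p : V → List V}
    (hc : IsDoubleCover G S p) (hN : N ⊆ S) (hcard : N.card ≤ 2) :
    ∃ (T : Finset V) (b : V → V),
      T ⊆ S ∧ (∀ i ∈ T, b i ∈ endpoints (p i)) ∧ T.val.map b = N.val := by
  obtain h | h | h : N.card = 0 ∨ N.card = 1 ∨ N.card = 2 := by omega
  · obtain rfl := Finset.card_eq_zero.1 h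
    exact ⟨∅, id, by simp, by simp, by simp⟩
  · obtain ⟨u, rfl⟩ := Finset.card_eq_one.1 h
    obtain ⟨i, hi, hui⟩ := hc.exists_mem_endpoints (hN (Finset.mem_singleton_self u))
    exact ⟨{i}, fun _ => u, by simpa using hi, by simpa using hui, by simp⟩
  · obtain ⟨u, w, huw, rfl⟩ := Finset.card_eq_two.1 h
    obtain ⟨i, hi, hui⟩ := hc.exists_mem_endpoints (hN (Finset.mem_insert_self u _))
    obtain ⟨j, hj, hji, hwj⟩ := hc.exists_ne_mem_endpoints
      (hN (Finset.mem_insert_of_mem (Finset.mem_singleton_self w))) hi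
      (count_endpoints_le_one hui huw.symm)
    refine ⟨{i, j}, fun k => if k = i then u else w, Finset.insert_subset hi (by simpa using hj),
      by simp [hui, hwj, hji], ?_⟩
    simp [Finset.insert_val_of_notMem (Finset.notMem_singleton.2 hji.symm),
      Finset.insert_val_of_notMem (Finset.notMem_singleton.2 huw), hji]

theorem IsDoubleCover.exists_insert {S : Finset V} {p : V → List V} {v : V}
    (hc : IsDoubleCover G S p) (hv : v ∉ S) (hdeg : (S.filter (G.Adj v)).card ≤ 2) :
    ∃ p', IsDoubleCover G (insert v S) p' := by
  obtain ⟨C, hC, hCmem, hCedge, hCends⟩ :=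
    exists_path_star (fun u hu => (Finset.mem_filter.1 hu).2) hdeg
  obtain ⟨T, b, hT, hb, hTN⟩ := hc.exists_paths_ending_at (Finset.filter_subset _ S) hdeg
  exact ⟨_, hc.insertVertex hv hT hb hTN hC hCmem hCedge hCends⟩

theorem exists_isDoubleCover (hG : TwoDegenerate G) (S : Finset V) :
    ∃ p, IsDoubleCover G S p := by
  induction S using Finset.strongInduction with
  | H S ih =>
    rcases S.eq_empty_or_nonempty with rfl | hS
    · exact ⟨fun _ => [], isDoubleCover_empty _⟩
    obtain ⟨v, hvS, hdeg⟩ := hG S (Finset.coe_nonempty.2 hS)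
    obtain ⟨p, hp⟩ := ih (S.erase v) (Finset.erase_ssubset hvS)
    have hdeg' : ((S.erase v).filter (G.Adj v)).card ≤ 2 := by
      refine le_trans ?_ hdeg
      rw [← Set.ncard_coe_finset]
      exact Set.ncard_le_ncard (fun u hu => by simp_all)
        (S.finite_toSet.subset fun u hu => hu.1)
    simpa [Finset.insert_erase hvS] using hp.exists_insert (Finset.notMem_erase v S) hdeg'

end

/-- For every 2-degenerate graph `G` on `n` vertices,
`ssp(G) ≤ n`. -/
theorem ssp_le_card_of_twoDegenerate {V : Type*} [Fintype V]
    (G : SimpleGraph V) (hG : TwoDegenerate G) :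
    ssp G ≤ Fintype.card V := by
  obtain ⟨p, hp⟩ := exists_isDoubleCover hG Finset.univ
  calc ssp G ≤ (Finset.univ.image p).card := Nat.sInf_le ⟨_, hp.stronglySeparating, rfl⟩
    _ ≤ Fintype.card V := Finset.card_image_le
end

section
/- Every connected cubic graph other than K₄ contains an edge that does not lie in any triangle. -/
open scoped Classical

/-!
If every edge of a cubic graph lies in a triangle, then the three neighbours of any vertex `v`
are pairwise adjacent. Otherwise the triangles on the edges at `v` force the neighbourhood of `v`
to induce a path `a - b - c`, so that `v` and `b` both have closed neighbourhood `{v, a, b, c}`;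
the third neighbour `x` of `a` then has no common neighbour with `a`. A connected graph whose
neighbourhoods are cliques is complete, and a complete cubic graph is `K₄`.
-/

namespace SimpleGraph

variable {V : Type*} {G : SimpleGraph V}

theorem Preconnected.eq_top_of_isClique_neighborSet (hconn : G.Preconnected)
    (hclique : ∀ v, G.IsClique (G.neighborSet v)) : G = ⊤ := by
  have eq_or_adj : ∀ {u w} (p : G.Walk u w), u = w ∨ G.Adj u w := by
    intro u w p
    induction p with
    | nil => exact .inl rfl
    | @cons u x w hux _ ih =>
      rcases ih with rfl | hxw
      · exact .inr hux
      · by_cases huw : u = w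
        · exact .inl huw
        · exact .inr (hclique x hux.symm hxw huw)
  ext u w
  exact ⟨G.ne_of_adj, (eq_or_adj (hconn u w).some).resolve_left⟩

variable [Fintype V]

theorem adj_iff_of_degree_eq_three {v a b c : V} (hv : G.degree v = 3)
    (ha : G.Adj v a) (hb : G.Adj v b) (hc : G.Adj v c)
    (hab : a ≠ b) (hac : a ≠ c) (hbc : b ≠ c) (x : V) :
    G.Adj v x ↔ x = a ∨ x = b ∨ x = c := by
  have hN : G.neighborFinset v = {a, b, c} := by
    refine (Finset.eq_of_subset_of_card_le ?_ ?_).symm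
    · simp [Finset.insert_subset_iff, ha, hb, hc]
    · rw [card_neighborFinset_eq_degree, hv,
        Finset.card_eq_three.2 ⟨a, b, c, hab, hac, hbc, rfl⟩]
  rw [← mem_neighborFinset, hN]
  simp

theorem exists_adj_ne_ne_of_degree_eq_three {a : V} (ha : G.degree a = 3) (v b : V) :
    ∃ x, G.Adj a x ∧ x ≠ v ∧ x ≠ b := by
  have hlt : ({v, b} : Finset V).card < (G.neighborFinset a).card := by
    rw [card_neighborFinset_eq_degree, ha]
    exact Finset.card_le_two.trans_lt (by norm_num)
  obtain ⟨x, hx, hxvb⟩ := Finset.exists_mem_notMem_of_card_lt_card hlt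
  simp only [Finset.mem_insert, Finset.mem_singleton, not_or] at hxvb
  exact ⟨x, (mem_neighborFinset ..).1 hx, hxvb⟩

theorem IsRegularOfDegree.isClique_neighborSet_of_forall_adj_exists_common
    (hcubic : G.IsRegularOfDegree 3)
    (htri : ∀ u w, G.Adj u w → ∃ t, G.Adj u t ∧ G.Adj w t) (v : V) :
    G.IsClique (G.neighborSet v) := by
  intro a (hva : G.Adj v a) c (hvc : G.Adj v c) hac
  by_contra hnac
  obtain ⟨b, hvb, hab⟩ := htri v a hva
  have hbc : b ≠ c := by rintro rfl; exact hnac hab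
  have hNv := adj_iff_of_degree_eq_three (hcubic v) hva hvb hvc (G.ne_of_adj hab) hac hbc
  have hcb : G.Adj c b := by
    obtain ⟨t, hvt, hct⟩ := htri v c hvc
    rcases (hNv t).1 hvt with rfl | rfl | rfl
    · exact absurd hct.symm hnac
    · exact hct
    · exact absurd hct (G.irrefl)
  have hNb := adj_iff_of_degree_eq_three (hcubic b) hvb.symm hab.symm hcb.symm
    (G.ne_of_adj hva) (G.ne_of_adj hvc) hac
  obtain ⟨x, hax, hxv, hxb⟩ := exists_adj_ne_ne_of_degree_eq_three (hcubic a) v b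
  have hNa := adj_iff_of_degree_eq_three (hcubic a) hva.symm hab hax
    (G.ne_of_adj hvb) hxv.symm hxb.symm
  obtain ⟨t, hat, hxt⟩ := htri a x hax
  rcases (hNa t).1 hat with rfl | rfl | rfl
  · rcases (hNv x).1 hxt.symm with rfl | rfl | rfl
    · exact G.irrefl hax
    · exact hxb rfl
    · exact hnac hax
  · rcases (hNb x).1 hxt.symm with rfl | rfl | rfl
    · exact hxv rfl
    · exact G.irrefl hax
    · exact hnac hax
  · exact G.irrefl hxt

end SimpleGraph

open SimpleGraph in
/-- every connected cubic graph other than `K₄` contains an edge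
lying in no triangle. -/
theorem exists_edge_not_in_triangle_of_cubic {V : Type*} [Fintype V]
    (G : SimpleGraph V) (hconn : G.Connected) (hcubic : ∀ v : V, G.degree v = 3)
    (hK4 : ¬ Nonempty (G ≃g (⊤ : SimpleGraph (Fin 4)))) :
    ∃ u v : V, G.Adj u v ∧ ∀ w : V, ¬ (G.Adj u w ∧ G.Adj v w) := by
  by_contra! htri
  have htop : G = ⊤ := hconn.preconnected.eq_top_of_isClique_neighborSet
    (IsRegularOfDegree.isClique_neighborSet_of_forall_adj_exists_common hcubic htri)
  obtain ⟨v⟩ := hconn.nonempty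
  have hcard : Fintype.card V = 4 := by
    have hdeg : Fintype.card V - 1 = 3 := by
      rw [← hcubic v, htop]
      convert (complete_graph_degree v).symm
    have := Fintype.card_pos_iff.2 ⟨v⟩
    omega
  exact hK4 ⟨htop ▸ Iso.completeGraph (Fintype.equivFinOfCardEq hcard)⟩
end
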